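/- arXiv:1909.00916 — 6 statements merged into one kernel-verified Lean document; each statement's English description precedes it below -/
import Mathlib

section
/- The polynomial p(A) = −A⁴ + A³ + 2A² − 2A + 4 has all its roots of modulus strictly greater than 1. -/
/-!
The quartic factors as `-(z - 2) (z³ + z² + 2)`. The root `2` is outside the unit disc, and a root
of the cubic satisfies `‖z‖² ‖z + 1‖ = 2`; inside the closed unit disc the left side is at most
`‖z + 1‖ ≤ ‖z‖ + 1 ≤ 2`, so equality throughout forces `z` onto the ray of `1` with norm `1`,
i.e. `z = 1`, which is not a root.
-/

theorem quartic_eq_neg_mul (z : ℂ) :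
    -z ^ 4 + z ^ 3 + 2 * z ^ 2 - 2 * z + 4 = -((z - 2) * (z ^ 3 + z ^ 2 + 2)) := by
  ring

theorem one_lt_norm_of_cubic_eq_zero {z : ℂ} (hz : z ^ 3 + z ^ 2 + 2 = 0) : 1 < ‖z‖ := by
  by_contra! hle
  have hnorm : ‖z‖ ^ 2 * ‖z + 1‖ = 2 := by
    have : z ^ 2 * (z + 1) = -2 := by linear_combination hz
    simpa [norm_pow] using congrArg (‖·‖) this
  have htri : ‖z + 1‖ ≤ ‖z‖ + 1 := by simpa using norm_add_le z 1
  have hz1 : ‖z‖ = 1 := by nlinarith [norm_nonneg z, norm_nonneg (z + 1)]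
  have hray : SameRay ℝ z 1 := by
    rw [sameRay_iff_norm_add, norm_one]
    rw [hz1] at hnorm ⊢
    linarith
  have hone : z = 1 := hray.eq_of_norm_eq (by rw [hz1, norm_one])
  norm_num [hone] at hz

theorem stmt2 (z : ℂ) (hz : -z ^ 4 + z ^ 3 + 2 * z ^ 2 - 2 * z + 4 = 0) :
    1 < ‖z‖ := by
  rw [quartic_eq_neg_mul, neg_eq_zero] at hz
  rcases mul_eq_zero.mp hz with h2 | hcubic
  · rw [sub_eq_zero.mp h2, Complex.norm_two]
    norm_num
  · exact one_lt_norm_of_cubic_eq_zero hcubic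
end

section
/- Let β, d > 0 with β < 1, and let A = ((β+d) − √((β+d)² + 4β(β−1)d))/(2d). Then A < 1. -/
theorem stmt8 (β d : ℝ) (hβ : 0 < β) (hd : 0 < d) (hβ1 : β < 1) :
    ((β + d) - Real.sqrt ((β + d) ^ 2 + 4 * β * (β - 1) * d)) / (2 * d) < 1 := by
  have hS : (β - d) ^ 2 < (β + d) ^ 2 + 4 * β * (β - 1) * d := by nlinarith [mul_pos (mul_pos hβ hβ) hd]
  have h1 : β - d < Real.sqrt ((β + d) ^ 2 + 4 * β * (β - 1) * d) := by
    calc β - d ≤ |β - d| := le_abs_self _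
    _ = Real.sqrt ((β - d) ^ 2) := (Real.sqrt_sq_eq_abs _).symm
    _ < _ := Real.sqrt_lt_sqrt (sq_nonneg _) hS
  rw [div_lt_one (by positivity)]
  linarith
end

section
/- Let β ≥ 1 and d > 0. The root A = ((β+d) − √((β+d)² + 4β(β−1)d))/(2d) of the quadratic dA² − (β+d)A − β(β−1) = 0 satisfies |A| ≤ 1 if and only if β² − 2β − 2d ≤ 0, i.e., if and only if β ≤ 1 + √(1 + 2d). -/
theorem stmt9 (β d : ℝ) (hβ : 1 ≤ β) (hd : 0 < d) :
    (|((β + d) - Real.sqrt ((β + d) ^ 2 + 4 * β * (β - 1) * d)) / (2 * d)| ≤ 1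
      ↔ β ^ 2 - 2 * β - 2 * d ≤ 0) ∧
    (|((β + d) - Real.sqrt ((β + d) ^ 2 + 4 * β * (β - 1) * d)) / (2 * d)| ≤ 1
      ↔ β ≤ 1 + Real.sqrt (1 + 2 * d)) := by
  have hpos : (0:ℝ) ≤ 4 * β * (β - 1) * d := by
    have h1 : (0:ℝ) ≤ β := by linarith
    have h2 : (0:ℝ) ≤ β - 1 := by linarith
    have := mul_nonneg (mul_nonneg h1 h2) hd.le
    linarith [mul_nonneg (mul_nonneg h1 h2) hd.le]
  have hx : (0:ℝ) ≤ (β + d) ^ 2 + 4 * β * (β - 1) * d := by nlinarith [sq_nonneg (β + d)]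
  set S := Real.sqrt ((β + d) ^ 2 + 4 * β * (β - 1) * d) with hSdef
  have hSnn : 0 ≤ S := Real.sqrt_nonneg _
  have hSsq : S ^ 2 = (β + d) ^ 2 + 4 * β * (β - 1) * d := Real.sq_sqrt hx
  have hβd : 0 ≤ β + d := by linarith
  have hSge : β + d ≤ S := by
    have h := Real.sqrt_le_sqrt (show (β + d) ^ 2 ≤ (β + d) ^ 2 + 4 * β * (β - 1) * d by nlinarith [hpos])
    rwa [Real.sqrt_sq hβd] at h
  have habs : |((β + d) - S) / (2 * d)| = (S - (β + d)) / (2 * d) := by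
    rw [abs_div, abs_of_nonpos (by linarith), abs_of_pos (by linarith), neg_sub]
  have key : |((β + d) - S) / (2 * d)| ≤ 1 ↔ β ^ 2 - 2 * β - 2 * d ≤ 0 := by
    rw [habs, div_le_one (by linarith)]
    constructor
    · intro h
      have h2 : S ≤ β + 3 * d := by linarith
      nlinarith [mul_self_le_mul_self hSnn h2]
    · intro h
      have h2 : S ^ 2 ≤ (β + 3 * d) ^ 2 := by nlinarith
      nlinarith [h2, hSnn, hd]
  have key2 : β ^ 2 - 2 * β - 2 * d ≤ 0 ↔ β ≤ 1 + Real.sqrt (1 + 2 * d) := by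
    have h1 : (0:ℝ) ≤ 1 + 2 * d := by linarith
    have h2 : Real.sqrt (1 + 2 * d) ^ 2 = 1 + 2 * d := Real.sq_sqrt h1
    have h3 : 0 ≤ Real.sqrt (1 + 2 * d) := Real.sqrt_nonneg _
    constructor
    · intro h; nlinarith
    · intro h; nlinarith
  exact ⟨key, key.trans key2⟩
end

section
/- The backward Euler method with explicit bulk boundary flux applied to the one-way coupled 1D diffusion equation is stable (all normal-mode amplification factors A with admissible decaying spatial modes satisfy |A| ≤ 1) if and only if β ≤ 1 + √(1 + 2d), where β is the bulk Courant number and d the diffusion Courant number. -/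
/-!
Subtracting the two normal-mode relations gives `β A⁻¹ = -w` with `w = d (κ - 1)`, and the
interior relation then becomes the real quadratic `(β - 1) w² - (β + d) w - β d = 0`, whose
discriminant `(β - d)² + 4 β² d` is positive. Hence `w` is real, and `|κ| > 1` means `w > 0` or
`w < -2d`, while `|A| ≤ 1` means `|w| ≥ β`. A negative root never lies in `(-β, -d)`; a positive
root is at least `β` exactly when the quadratic is nonpositive at `β`, i.e. when
`β (β - 2) ≤ 2 d`, which is `β ≤ 1 + √(1 + 2d)`. Otherwise the intermediate value theorem gives
a root in `(0, β)`, an unstable mode.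
-/

open Set

def modeQuadratic {R : Type*} [CommRing R] (β d w : R) : R :=
  (β - 1) * w ^ 2 - (β + d) * w - β * d

@[simp, norm_cast]
lemma Complex.ofReal_modeQuadratic (β d x : ℝ) :
    ((modeQuadratic β d x : ℝ) : ℂ) = modeQuadratic (β : ℂ) d x := by
  simp [modeQuadratic]

lemma Complex.im_eq_zero_of_quadratic_eq_zero {a b c : ℝ} (hD : 0 < discrim a b c) {z : ℂ}
    (hz : (a : ℂ) * (z * z) + b * z + c = 0) : z.im = 0 := by
  have hre := congrArg Complex.re hz
  have him := congrArg Complex.im hz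
  simp only [Complex.add_re, Complex.mul_re, Complex.ofReal_re, Complex.ofReal_im, Complex.add_im,
    Complex.mul_im, Complex.zero_re, Complex.zero_im] at hre him
  by_contra h
  have hvertex : 2 * a * z.re + b = 0 :=
    (mul_eq_zero.1 (by linear_combination him : z.im * (2 * a * z.re + b) = 0)).resolve_left h
  have : discrim a b c = -(2 * a * z.im) ^ 2 := by
    unfold discrim; linear_combination (-4 * a) * hre + (2 * a * z.re + b) * hvertex
  nlinarith

lemma im_eq_zero_of_modeQuadratic_eq_zero {β d : ℝ} (hβ : β ≠ 0) (hd : 0 < d) {w : ℂ}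
    (hw : modeQuadratic (β : ℂ) d w = 0) : w.im = 0 := by
  refine Complex.im_eq_zero_of_quadratic_eq_zero (a := β - 1) (b := -(β + d)) (c := -(β * d))
    ?_ ?_
  · have : discrim (β - 1) (-(β + d)) (-(β * d)) = (β - d) ^ 2 + 4 * β ^ 2 * d := by
      unfold discrim; ring
    rw [this]; positivity
  · rw [modeQuadratic] at hw; push_cast; linear_combination hw

lemma boundary_relations_iff {β d A κ : ℂ} (hβ : β ≠ 0) (hd : d ≠ 0) (hκ : κ ≠ 0) :
    (1 - A⁻¹ = d * (κ - 2 + κ⁻¹) ∧ 1 - A⁻¹ = -β * A⁻¹ - d * (1 - κ⁻¹)) ↔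
      A = -β / (d * (κ - 1)) ∧ modeQuadratic β d (d * (κ - 1)) = 0 := by
  have hA : A = -β / (d * (κ - 1)) ↔ A⁻¹ = -(d * (κ - 1)) / β := by
    rw [← inv_inj, inv_div, neg_div, div_neg]
  have hinterior (hAinv : A⁻¹ = -(d * (κ - 1)) / β) :
      1 - A⁻¹ = d * (κ - 2 + κ⁻¹) ↔ modeQuadratic β d (d * (κ - 1)) = 0 := by
    have key : modeQuadratic β d (d * (κ - 1)) =
        -(d * β * κ) * (1 - A⁻¹ - d * (κ - 2 + κ⁻¹)) := by
      rw [hAinv, modeQuadratic]; field_simp; ring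
    rw [key, mul_eq_zero_iff_left (by simp [hβ, hd, hκ]), sub_eq_zero]
  rw [hA]
  constructor
  · rintro ⟨h1, h2⟩
    have hAinv : A⁻¹ = -(d * (κ - 1)) / β := by
      rw [eq_div_iff hβ]; linear_combination h2 - h1
    exact ⟨hAinv, (hinterior hAinv).1 h1⟩
  · rintro ⟨hAinv, hw⟩
    have h1 := (hinterior hAinv).2 hw
    refine ⟨h1, h1.trans ?_⟩
    rw [hAinv]; field_simp; ring

lemma le_one_add_sqrt_iff {β d : ℝ} (hβ : 0 ≤ β) (hd : 0 ≤ d) :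
    β ≤ 1 + √(1 + 2 * d) ↔ β * (β - 2) ≤ 2 * d := by
  have hsqrt : 1 ≤ √(1 + 2 * d) := Real.one_le_sqrt.2 (by linarith)
  rw [← sub_le_iff_le_add',
    ← and_iff_right (a := -√(1 + 2 * d) ≤ β - 1) (b := β - 1 ≤ √(1 + 2 * d)) (by linarith),
    ← Real.sq_le (by linarith)]
  constructor <;> intro h <;> linarith

lemma le_of_modeQuadratic_eq_zero {β d w : ℝ} (hβ : 0 < β) (hd : 0 ≤ d)
    (hβd : β * (β - 2) ≤ 2 * d) (hw : modeQuadratic β d w = 0) (hw0 : 0 < w) : β ≤ w := by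
  unfold modeQuadratic at hw
  by_contra! hwβ
  nlinarith [mul_pos hw0 (sub_pos.2 hwβ), mul_nonneg hβ.le hd]

lemma le_neg_of_modeQuadratic_eq_zero {β d w : ℝ} (hd : 0 ≤ d)
    (hw : modeQuadratic β d w = 0) (hwd : w < -d) : w ≤ -β := by
  by_contra! hβw
  have key : modeQuadratic β d w = (-w) ^ 3 + (β + w) * (w ^ 2 - w - d) := by
    unfold modeQuadratic; ring
  have : 0 < modeQuadratic β d w := by
    rw [key]; exact add_pos (pow_pos (by linarith) 3) (mul_pos (by linarith) (by nlinarith))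
  linarith

lemma le_abs_of_modeQuadratic_eq_zero {β d x : ℝ} (hβ : 0 < β) (hd : 0 < d)
    (hβd : β * (β - 2) ≤ 2 * d) (hx : modeQuadratic β d x = 0) (hκ : 1 < |1 + x / d|) :
    β ≤ |x| := by
  rcases lt_abs.1 hκ with hpos | hneg
  · have hx0 : 0 < x := by simpa [div_pos_iff_of_pos_right hd] using hpos
    rw [abs_of_pos hx0]
    exact le_of_modeQuadratic_eq_zero hβ hd.le hβd hx hx0
  · have hxd : x < -d := by
      have : x / d < -2 := by linarith
      rw [div_lt_iff₀ hd] at this; linarith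
    rw [abs_of_neg (by linarith)]
    linarith [le_neg_of_modeQuadratic_eq_zero hd.le hx hxd]

lemma exists_modeQuadratic_eq_zero_mem_Ioo {β d : ℝ} (hβ : 0 < β) (hd : 0 < d)
    (hβd : 2 * d < β * (β - 2)) : ∃ w ∈ Ioo 0 β, modeQuadratic β d w = 0 := by
  have hcont : ContinuousOn (modeQuadratic β d) (Icc 0 β) := by
    unfold modeQuadratic; fun_prop
  refine intermediate_value_Ioo hβ.le hcont ⟨?_, ?_⟩
  · simp only [modeQuadratic]; nlinarith [mul_pos hβ hd]
  · simp only [modeQuadratic]; nlinarith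

lemma norm_le_one_of_boundary_relations {β d : ℝ} (hβ : 0 < β) (hd : 0 < d)
    (hβd : β * (β - 2) ≤ 2 * d) {A κ : ℂ} (hκ : κ ≠ 0) (hκ1 : 1 < ‖κ‖)
    (h1 : 1 - A⁻¹ = (d : ℂ) * (κ - 2 + κ⁻¹))
    (h2 : 1 - A⁻¹ = -(β : ℂ) * A⁻¹ - (d : ℂ) * (1 - κ⁻¹)) : ‖A‖ ≤ 1 := by
  have hd' : (d : ℂ) ≠ 0 := by exact_mod_cast hd.ne'
  obtain ⟨hA, hw⟩ := (boundary_relations_iff (by exact_mod_cast hβ.ne') hd' hκ).1 ⟨h1, h2⟩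
  obtain ⟨x, hx⟩ : ∃ x : ℝ, (d : ℂ) * (κ - 1) = x :=
    ⟨_, Complex.ext rfl (by simpa using im_eq_zero_of_modeQuadratic_eq_zero hβ.ne' hd hw)⟩
  rw [hx] at hA hw
  have hκx : κ = ((1 + x / d : ℝ) : ℂ) := by
    push_cast; field_simp; linear_combination hx
  have hβx : β ≤ |x| := by
    refine le_abs_of_modeQuadratic_eq_zero hβ hd hβd (by exact_mod_cast hw) ?_
    rwa [hκx, Complex.norm_real, Real.norm_eq_abs] at hκ1
  rw [hA, norm_div, norm_neg, Complex.norm_real, Complex.norm_real, Real.norm_of_nonneg hβ.le,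
    Real.norm_eq_abs]
  exact div_le_one_of_le₀ hβx (abs_nonneg x)

lemma exists_unstable_mode {β d : ℝ} (hβ : 0 < β) (hd : 0 < d) (hβd : 2 * d < β * (β - 2)) :
    ∃ A κ : ℂ, A ≠ 0 ∧ κ ≠ 0 ∧ 1 < ‖κ‖ ∧ 1 - A⁻¹ = (d : ℂ) * (κ - 2 + κ⁻¹) ∧
      1 - A⁻¹ = -(β : ℂ) * A⁻¹ - (d : ℂ) * (1 - κ⁻¹) ∧ 1 < ‖A‖ := by
  obtain ⟨w, ⟨hw0, hwβ⟩, hw⟩ := exists_modeQuadratic_eq_zero_mem_Ioo hβ hd hβd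
  have hκ1 : 1 < 1 + w / d := lt_add_of_pos_right 1 (div_pos hw0 hd)
  have hA1 : 1 < β / w := (one_lt_div hw0).2 hwβ
  have hd' : (d : ℂ) ≠ 0 := by exact_mod_cast hd.ne'
  have hκ : ((1 + w / d : ℝ) : ℂ) ≠ 0 := by exact_mod_cast (by linarith : 1 + w / d ≠ 0)
  have hwκ : (d : ℂ) * ((1 + w / d : ℝ) - 1) = w := by push_cast; field_simp; ring
  have hβ' : (β : ℂ) ≠ 0 := by exact_mod_cast hβ.ne'
  obtain ⟨h1, h2⟩ := (boundary_relations_iff (A := ((-(β / w) : ℝ) : ℂ)) hβ' hd' hκ).2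
    ⟨by rw [hwκ]; push_cast; ring, by rw [hwκ]; exact_mod_cast hw⟩
  refine ⟨_, _, by exact_mod_cast (by linarith : -(β / w) ≠ 0), hκ, ?_, h1, h2, ?_⟩
  · rwa [Complex.norm_real, Real.norm_of_nonneg (by linarith)]
  · rwa [Complex.norm_real, Real.norm_eq_abs, abs_neg, abs_of_pos (by linarith)]

/-- Stability of backward Euler with explicit bulk boundary flux for the one-way
coupled 1D diffusion model: all normal-mode amplification factors `A` with
admissible decaying spatial modes `κ` (satisfying the interior relation
`1 - A⁻¹ = d (κ - 2 + κ⁻¹)` and boundary relation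
`1 - A⁻¹ = -β A⁻¹ - d (1 - κ⁻¹)`, with `|κ| > 1` for far-field decay)
satisfy `|A| ≤ 1` iff `β ≤ 1 + √(1 + 2d)`. -/
theorem stmt10 (β d : ℝ) (hβ : 0 < β) (hd : 0 < d) :
    (∀ A κ : ℂ, A ≠ 0 → κ ≠ 0 → 1 < ‖κ‖ →
        1 - A⁻¹ = (d : ℂ) * (κ - 2 + κ⁻¹) →
        1 - A⁻¹ = -(β : ℂ) * A⁻¹ - (d : ℂ) * (1 - κ⁻¹) →
        ‖A‖ ≤ 1)
    ↔ β ≤ 1 + Real.sqrt (1 + 2 * d) := by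
  rw [le_one_add_sqrt_iff hβ.le hd.le]
  constructor
  · intro hstable
    by_contra! hβd
    obtain ⟨A, κ, hA, hκ, hκ1, h1, h2, hA1⟩ := exists_unstable_mode hβ hd hβd
    exact (hstable A κ hA hκ hκ1 h1 h2).not_gt hA1
  · intro hβd A κ _ hκ hκ1 h1 h2
    exact norm_le_one_of_boundary_relations hβ hd hβd hκ hκ1 h1 h2
end

section
/- Let β, d > 0 and define A = (β − d)/(β − d + β²) and κ⁻¹ = d/(d − β) (with β ≠ d and β − d + β² ≠ 0). If |κ⁻¹| ≤ 1 (equivalently β ≥ 2d), then |A| ≤ 1. -/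
theorem stmt11 (β d : ℝ) (hβ : 0 < β) (hd : 0 < d) (hne : β ≠ d)
    (hden : β - d + β ^ 2 ≠ 0)
    (hκ : |d / (d - β)| ≤ 1) :
    |(β - d) / (β - d + β ^ 2)| ≤ 1 := by
  have hdb : d - β ≠ 0 := sub_ne_zero.mpr (Ne.symm hne)
  rw [abs_div] at hκ
  have h1 : |d| ≤ |d - β| := by
    have := (div_le_one (abs_pos.mpr hdb)).mp hκ
    linarith
  have hβd : d < β := by
    by_contra h
    push_neg at h
    have : |d - β| = d - β := abs_of_nonneg (by linarith)
    rw [this, abs_of_pos hd] at h1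
    linarith
  have hnum : 0 < β - d := by linarith
  have hden' : 0 < β - d + β ^ 2 := by positivity
  rw [abs_div, abs_of_pos hnum, abs_of_pos hden', div_le_one hden']
  nlinarith
end

section
/- For β, d > 0 with β ≠ d, the quantity A = (β − d)/(β − d + β²) satisfies |A| ≤ 1 if and only if β ≥ d or β² + 2β − 2d ≥ 0; combining both cases, |A| ≤ 1 if and only if β ≥ √(1 + 2d) − 1. -/
theorem stmt12 (β d : ℝ) (hβ : 0 < β) (hd : 0 < d) (hne : β ≠ d)
    (hden : β - d + β ^ 2 ≠ 0) :
    (|(β - d) / (β - d + β ^ 2)| ≤ 1 ↔ (d ≤ β ∨ 0 ≤ β ^ 2 + 2 * β - 2 * d)) ∧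
    (|(β - d) / (β - d + β ^ 2)| ≤ 1 ↔ Real.sqrt (1 + 2 * d) - 1 ≤ β) := by
  have key : |(β - d) / (β - d + β ^ 2)| ≤ 1 ↔ 0 ≤ β ^ 2 + 2 * β - 2 * d := by
    rw [abs_div, div_le_one (abs_pos.mpr hden), ← sq_le_sq]
    constructor
    · intro h2
      by_contra hc
      push_neg at hc
      have hmul : β ^ 2 * (β ^ 2 + 2 * β - 2 * d) < 0 :=
        mul_neg_of_pos_of_neg (pow_pos hβ 2) (by linarith)
      nlinarith
    · intro h
      nlinarith [sq_nonneg β]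
  have key2 : (0 ≤ β ^ 2 + 2 * β - 2 * d) ↔ Real.sqrt (1 + 2 * d) - 1 ≤ β := by
    constructor
    · intro h
      have h1 : Real.sqrt (1 + 2 * d) ≤ β + 1 := by
        rw [show β + 1 = Real.sqrt ((β + 1) ^ 2) by
          rw [Real.sqrt_sq (by linarith)]]
        exact Real.sqrt_le_sqrt (by nlinarith)
      linarith
    · intro h
      have hs : Real.sqrt (1 + 2 * d) ≤ β + 1 := by linarith
      have := Real.sq_sqrt (by linarith : (0:ℝ) ≤ 1 + 2 * d)
      nlinarith [Real.sqrt_nonneg (1 + 2 * d)]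
  constructor
  · rw [key]
    constructor
    · exact Or.inr
    · rintro (h | h)
      · nlinarith [sq_nonneg β]
      · exact h
  · rw [key, key2]
end
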